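/- arXiv:0906.3227 — 5 statements merged into one kernel-verified Lean document; each statement's English description precedes it below -/
import Mathlib

section
/- Every cellular automaton is simulated by some one-way cellular automaton: for every CA (T,g) there exist a finite set S and a one-way local rule h : S³ → S such that the CA (S,h) simulates (T,g). -/
/-!
A cell of the one-way automaton stores two adjacent cells of the original one. The new values
at the original positions `2i - 1` and `2i` depend only on the original positions
`2i - 2, …, 2i + 1`, which are stored in the cells `i - 1` and `i`; so a step looking only to
the left is possible, at the price of sliding the stored window one original cell to the left.
After two steps the window has moved by a whole cell, which the shift undoes.
-/

/-- Global map of a one-dimensional radius-1 cellular automaton with local rule `f`. -/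
def globalMap {S : Type*} (f : S → S → S → S) (c : ℤ → S) : ℤ → S :=
  fun i => f (c (i - 1)) (c i) (c (i + 1))

/-- The shift `σ^s` (by `s ∈ ℤ`): `σ^s(c)(i) = c(i + s)`. -/
def shiftBy {S : Type*} (s : ℤ) (c : ℤ → S) : ℤ → S :=
  fun i => c (i + s)

/-- `x ∈ e⁻¹(c)`: each length-`m` block of `x` is mapped by `e` to the
corresponding length-`m'` block of `c`. -/
def Decodes {S T : Type*} {m m' : ℕ} (e : (Fin m → S) → (Fin m' → T))
    (x : ℤ → S) (c : ℤ → T) : Prop :=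
  ∀ i : ℤ, (e fun j => x (i * (m : ℤ) + (j : ℤ))) = fun (j : Fin m') => c (i * (m' : ℤ) + (j : ℤ))

/-- The CA with local rule `f` simulates the CA with local rule `g`. -/
def Simulates {S T : Type*} (f : S → S → S → S) (g : T → T → T → T) : Prop :=
  ∃ (m m' t t' : ℕ) (s : ℤ) (e : (Fin m → S) → (Fin m' → T)),
    0 < m ∧ 0 < m' ∧ 0 < t ∧ 0 < t' ∧ Function.Surjective e ∧
    ∀ (c : ℤ → T) (x : ℤ → S), Decodes e x c →
      Decodes e (shiftBy s ((globalMap f)^[t] x)) ((globalMap g)^[t'] c)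

/-- A CA is one-way if its local rule does not depend on the third argument. -/
def OneWay {S : Type*} (f : S → S → S → S) : Prop :=
  ∀ x y z z' : S, f x y z = f x y z'

section

variable {T : Type*}

def pairRule (g : T → T → T → T) :
    (T × T) → (T × T) → (T × T) → (T × T) :=
  fun u v _ => (g u.1 u.2 v.1, g u.2 v.1 v.2)

def pairBlocks (c : ℤ → T) (a : ℤ) : ℤ → T × T :=
  fun i => (c (2 * i + a), c (2 * i + a + 1))

def pairDecode (x : Fin 1 → T × T) : Fin 2 → T :=
  ![(x 0).1, (x 0).2]

lemma pairRule_oneWay (g : T → T → T → T) : OneWay (pairRule g) :=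
  fun _ _ _ _ => rfl

lemma pairDecode_surjective : Function.Surjective (pairDecode (T := T)) := by
  intro y
  refine ⟨fun _ => (y 0, y 1), ?_⟩
  ext j
  fin_cases j <;> rfl

lemma decodes_pairDecode_iff (x : ℤ → T × T) (c : ℤ → T) :
    Decodes pairDecode x c ↔ x = pairBlocks c 0 := by
  simp only [Decodes, pairDecode, funext_iff, Fin.forall_fin_two, pairBlocks]
  norm_num [Prod.ext_iff, mul_comm]

lemma globalMap_pairRule_pairBlocks (g : T → T → T → T) (c : ℤ → T) (a : ℤ) :
    globalMap (pairRule g) (pairBlocks c a) = pairBlocks (globalMap g c) (a - 1) := by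
  ext i <;> simp only [globalMap, pairRule, pairBlocks] <;> congr 1 <;> ring_nf

lemma iterate_globalMap_pairRule_pairBlocks (g : T → T → T → T) (c : ℤ → T) (a : ℤ) (n : ℕ) :
    (globalMap (pairRule g))^[n] (pairBlocks c a) = pairBlocks ((globalMap g)^[n] c) (a - n) := by
  induction n generalizing c a with
  | zero => simp
  | succ n ih =>
    rw [Function.iterate_succ_apply, globalMap_pairRule_pairBlocks, ih,
      Function.iterate_succ_apply]
    congr 1
    push_cast
    ring

lemma shiftBy_one_pairBlocks (c : ℤ → T) (a : ℤ) :
    shiftBy 1 (pairBlocks c a) = pairBlocks c (a + 2) := by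
  ext i <;> simp only [shiftBy, pairBlocks] <;> ring_nf

end

/-- Every cellular automaton is simulated by some one-way cellular automaton. -/
theorem exists_one_way_simulating
    (T : Type) [Fintype T] (g : T → T → T → T) :
    ∃ (S : Type) (_ : Fintype S) (h : S → S → S → S),
      OneWay h ∧ Simulates h g := by
  refine ⟨T × T, inferInstance, pairRule g, pairRule_oneWay g,
    1, 2, 2, 2, 1, pairDecode, one_pos, two_pos, two_pos, two_pos, pairDecode_surjective, ?_⟩
  intro c x hx
  rw [decodes_pairDecode_iff] at hx ⊢
  rw [hx, iterate_globalMap_pairRule_pairBlocks, shiftBy_one_pairBlocks]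
  norm_num
end

section
/- The sum of an l-encoding and an m-encoding preserves the state bits: if a is an l-encoding of a state s and b is an m-encoding of a state s', then for every digit index 0 ≤ i < k, bit 3+8i+5 of a+b equals s_i, and bit 3+8i+1 of a+b equals s'_i. -/
/-!
Bits 4 and 0 of every digit block are clear in both summands, so the addition carries nothing
into bits 5 and 1 of the block. There each bit of `a + b` is the xor of the bits of `a` and `b`,
and one of the two is 0 by the shape of the encodings.
-/

/-- With `L = 8*k+7`, a number `a < 2^L` is an *l-encoding* of the state
`s ∈ {0,1}^k` if bit `L-1 = 0`, bit `L-2 = 1`, bit `L-3 = 0`, bit `L-4 = 1`,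
and in each digit block `i` (bits `3+8*i, …, 3+8*i+7`): `b5 = s i` and
`b4 = b1 = b0 = 0`, all remaining bits being arbitrary. -/
def IsLEnc (k : ℕ) (s : Fin k → Bool) (a : ℕ) : Prop :=
  a < 2 ^ (8 * k + 7) ∧
  a.testBit (8 * k + 6) = false ∧ a.testBit (8 * k + 5) = true ∧
  a.testBit (8 * k + 4) = false ∧ a.testBit (8 * k + 3) = true ∧
  ∀ i : Fin k,
    a.testBit (3 + 8 * (i : ℕ) + 5) = s i ∧
    a.testBit (3 + 8 * (i : ℕ) + 4) = false ∧
    a.testBit (3 + 8 * (i : ℕ) + 1) = false ∧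
    a.testBit (3 + 8 * (i : ℕ)) = false

/-- With `L = 8*k+7`, a number `b < 2^L` is an *m-encoding* of the state
`s' ∈ {0,1}^k` if bits `L-1, L-2, L-3, L-4` are all `0`, and in each digit
block `i`: `b1 = s' i` and `b5 = b4 = b0 = 0`, all remaining bits arbitrary. -/
def IsMEnc (k : ℕ) (s' : Fin k → Bool) (b : ℕ) : Prop :=
  b < 2 ^ (8 * k + 7) ∧
  b.testBit (8 * k + 6) = false ∧ b.testBit (8 * k + 5) = false ∧
  b.testBit (8 * k + 4) = false ∧ b.testBit (8 * k + 3) = false ∧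
  ∀ i : Fin k,
    b.testBit (3 + 8 * (i : ℕ) + 1) = s' i ∧
    b.testBit (3 + 8 * (i : ℕ) + 5) = false ∧
    b.testBit (3 + 8 * (i : ℕ) + 4) = false ∧
    b.testBit (3 + 8 * (i : ℕ)) = false

/-- With `L = 8*k+7`, a number `ℓ < 2^L` is an *l⁰-form* for the state
`t ∈ {0,1}^k` if bit `L-1 = 0`, bit `L-2 = 1`, bit `L-3 = 0`, bit `1 = 1`,
bit `0 = 0`, and in each digit block `i`: `b6 = 1 - t i`, `b5 = 1`, `b2 = 1`
and `b1 = 1`, all remaining bits arbitrary. -/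
def IsL0Form (k : ℕ) (t : Fin k → Bool) (l : ℕ) : Prop :=
  l < 2 ^ (8 * k + 7) ∧
  l.testBit (8 * k + 6) = false ∧ l.testBit (8 * k + 5) = true ∧
  l.testBit (8 * k + 4) = false ∧
  l.testBit 1 = true ∧ l.testBit 0 = false ∧
  ∀ i : Fin k,
    l.testBit (3 + 8 * (i : ℕ) + 6) = !(t i) ∧
    l.testBit (3 + 8 * (i : ℕ) + 5) = true ∧
    l.testBit (3 + 8 * (i : ℕ) + 2) = true ∧
    l.testBit (3 + 8 * (i : ℕ) + 1) = true

namespace Nat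

theorem mod_two_pow_succ_lt_of_testBit_eq_false {a n : ℕ} (h : a.testBit n = false) :
    a % 2 ^ (n + 1) < 2 ^ n := by
  have hbit : a / 2 ^ n % 2 = 0 := by
    simpa [testBit_eq_decide_div_mod_eq] using h
  rw [mod_pow_succ, hbit, Nat.mul_zero, Nat.add_zero]
  exact mod_lt _ (Nat.two_pow_pos n)

theorem testBit_zero_add (x y : ℕ) :
    (x + y).testBit 0 = (x.testBit 0 ^^ y.testBit 0) := by
  simp only [testBit_zero]
  rcases mod_two_eq_zero_or_one x with hx | hx <;>
    rcases mod_two_eq_zero_or_one y with hy | hy <;>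
    simp [Nat.add_mod, hx, hy]

theorem testBit_add_succ_of_testBit_eq_false {a b n : ℕ}
    (ha : a.testBit n = false) (hb : b.testBit n = false) :
    (a + b).testBit (n + 1) = (a.testBit (n + 1) ^^ b.testBit (n + 1)) := by
  have hlow : a % 2 ^ (n + 1) + b % 2 ^ (n + 1) < 2 ^ (n + 1) := by
    have := mod_two_pow_succ_lt_of_testBit_eq_false ha
    have := mod_two_pow_succ_lt_of_testBit_eq_false hb
    have := Nat.two_pow_succ n
    omega
  rw [← Nat.zero_add (n + 1), testBit_add, testBit_add a, testBit_add b,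
    add_div_eq_of_add_mod_lt hlow, testBit_zero_add]

end Nat

theorem sum_l_m_encoding_preserves_state_bits_general
    (k : ℕ) (s s' : Fin k → Bool) (a b : ℕ)
    (ha : IsLEnc k s a) (hb : IsMEnc k s' b) :
    ∀ i : Fin k,
      (a + b).testBit (3 + 8 * (i : ℕ) + 5) = s i ∧
      (a + b).testBit (3 + 8 * (i : ℕ) + 1) = s' i := by
  intro i
  obtain ⟨ha5, ha4, ha1, ha0⟩ := ha.2.2.2.2.2 i
  obtain ⟨hb1, hb5, hb4, hb0⟩ := hb.2.2.2.2.2 i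
  constructor
  · rw [Nat.testBit_add_succ_of_testBit_eq_false ha4 hb4, ha5, hb5, Bool.xor_false]
  · rw [Nat.testBit_add_succ_of_testBit_eq_false ha0 hb0, ha1, hb1, Bool.false_xor]

/-- The sum of an l-encoding of `s` and an m-encoding of `s'` has bit
`3+8*i+5` equal to `s i` and bit `3+8*i+1` equal to `s' i`, for every
digit index `i < k`. -/
theorem sum_l_m_encoding_preserves_state_bits
    (k : ℕ) (hk : 1 ≤ k) (s s' : Fin k → Bool) (a b : ℕ)
    (ha : IsLEnc k s a) (hb : IsMEnc k s' b) :
    ∀ i : Fin k,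
      (a + b).testBit (3 + 8 * (i : ℕ) + 5) = s i ∧
      (a + b).testBit (3 + 8 * (i : ℕ) + 1) = s' i :=
  sum_l_m_encoding_preserves_state_bits_general k s s' a b ha hb
end

section
/- The sum of an l-encoding and an m-encoding has a recognizable header: if a is an l-encoding of some state and b is an m-encoding of some state, then bit L−1 of a+b is 0, bit L−2 of a+b is 1, and exactly one of bits L−3 and L−4 of a+b is 1; equivalently, 2^{L−2}+2^{L−4} ≤ a+b < 2^{L−2}+2^{L−3}+2^{L−4}. -/
/-!
Cut every number at bit `m = L - 4 = 8k + 3`. The four header bits of an l-encoding read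
`0101`, so `a = 5 * 2^m + r` with `r < 2^m`, while the header of an m-encoding is `0000`, so
`b < 2^m`. Hence `5 * 2^m ≤ a + b < 7 * 2^m`: the carry out of the lower bits can only turn the
header `0101` into `0110`, and both of these have the claimed shape.
-/

namespace Nat

theorem div_two_pow_eq_of_testBit {n m w q : ℕ} (hn : n < 2 ^ (m + w)) (hq : q < 2 ^ w)
    (h : ∀ j < w, n.testBit (m + j) = q.testBit j) : n / 2 ^ m = q := by
  refine eq_of_testBit_eq fun j => ?_
  rw [testBit_div_two_pow, add_comm]
  by_cases hj : j < w
  · exact h j hj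
  · have hw : w ≤ j := not_lt.mp hj
    rw [testBit_eq_false_of_lt (hn.trans_le (Nat.pow_le_pow_right two_pos (by omega))),
      testBit_eq_false_of_lt (hq.trans_le (Nat.pow_le_pow_right two_pos hw))]

end Nat

theorem IsLEnc.div_two_pow_eq {k : ℕ} {s : Fin k → Bool} {a : ℕ} (ha : IsLEnc k s a) :
    a / 2 ^ (8 * k + 3) = 5 := by
  obtain ⟨hlt, h6, h5, h4, h3, -⟩ := ha
  refine Nat.div_two_pow_eq_of_testBit (w := 4) hlt (by norm_num) fun j hj => ?_
  interval_cases j <;> assumption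

theorem IsMEnc.lt_two_pow {k : ℕ} {s' : Fin k → Bool} {b : ℕ} (hb : IsMEnc k s' b) :
    b < 2 ^ (8 * k + 3) := by
  obtain ⟨hlt, h6, h5, h4, h3, -⟩ := hb
  refine (Nat.div_eq_zero_iff_lt (by positivity)).mp <|
    Nat.div_two_pow_eq_of_testBit (w := 4) hlt (by norm_num) fun j hj => ?_
  interval_cases j <;> simpa

theorem add_bounds_of_isLEnc_of_isMEnc {k : ℕ} {s s' : Fin k → Bool} {a b : ℕ}
    (ha : IsLEnc k s a) (hb : IsMEnc k s' b) :
    5 * 2 ^ (8 * k + 3) ≤ a + b ∧ a + b < 7 * 2 ^ (8 * k + 3) := by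
  have hdiv := Nat.div_add_mod a (2 ^ (8 * k + 3))
  have hmod := Nat.mod_lt a (show 0 < 2 ^ (8 * k + 3) by positivity)
  rw [ha.div_two_pow_eq] at hdiv
  have hb' := hb.lt_two_pow
  omega

theorem sum_l_m_encoding_header_general
    (k : ℕ) (s s' : Fin k → Bool) (a b : ℕ)
    (ha : IsLEnc k s a) (hb : IsMEnc k s' b) :
    (a + b).testBit (8 * k + 6) = false ∧
    (a + b).testBit (8 * k + 5) = true ∧
    ((a + b).testBit (8 * k + 4) ≠ (a + b).testBit (8 * k + 3)) ∧
    (2 ^ (8 * k + 5) + 2 ^ (8 * k + 3) ≤ a + b ∧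
      a + b < 2 ^ (8 * k + 5) + 2 ^ (8 * k + 4) + 2 ^ (8 * k + 3)) := by
  obtain ⟨hlo, hhi⟩ := add_bounds_of_isLEnc_of_isMEnc ha hb
  set m := 8 * k + 3
  set q := (a + b) / 2 ^ m
  have hq : q = 5 ∨ q = 6 := by
    have := Nat.div_lt_of_lt_mul (hhi.trans_eq (mul_comm _ _))
    have := (Nat.le_div_iff_mul_le (by positivity)).mpr hlo
    omega
  have hbit (j : ℕ) : (a + b).testBit (m + j) = q.testBit j := by
    rw [Nat.testBit_div_two_pow, Nat.add_comm j]
  obtain ⟨h3, h2, h1, h0⟩ : (a + b).testBit (8 * k + 6) = q.testBit 3 ∧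
      (a + b).testBit (8 * k + 5) = q.testBit 2 ∧ (a + b).testBit (8 * k + 4) = q.testBit 1 ∧
      (a + b).testBit m = q.testBit 0 :=
    ⟨hbit 3, hbit 2, hbit 1, hbit 0⟩
  have h4 : 2 ^ (8 * k + 4) = 2 * 2 ^ m := pow_succ' 2 m
  have h5 : 2 ^ (8 * k + 5) = 4 * 2 ^ m := by rw [pow_succ', h4]; ring
  rw [h3, h2, h1, h0, h4, h5]
  refine ⟨?_, ?_, ?_, by omega, by omega⟩ <;> rcases hq with hq | hq <;> rw [hq] <;> decide

/-- The sum of an l-encoding and an m-encoding has a recognizable header: bit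
`L-1` is `0`, bit `L-2` is `1`, exactly one of bits `L-3` and `L-4` is `1`;
equivalently `2^(L-2) + 2^(L-4) ≤ a + b < 2^(L-2) + 2^(L-3) + 2^(L-4)`. -/
theorem sum_l_m_encoding_header
    (k : ℕ) (hk : 1 ≤ k) (s s' : Fin k → Bool) (a b : ℕ)
    (ha : IsLEnc k s a) (hb : IsMEnc k s' b) :
    (a + b).testBit (8 * k + 6) = false ∧
    (a + b).testBit (8 * k + 5) = true ∧
    ((a + b).testBit (8 * k + 4) ≠ (a + b).testBit (8 * k + 3)) ∧
    (2 ^ (8 * k + 5) + 2 ^ (8 * k + 3) ≤ a + b ∧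
      a + b < 2 ^ (8 * k + 5) + 2 ^ (8 * k + 4) + 2 ^ (8 * k + 3)) :=
  sum_l_m_encoding_header_general k s s' a b ha hb
end

section
/- Existence of a suitable first-block rule value: for every u < 2^L whose bit L−1 is 0, bit L−2 is 1, and exactly one of whose bits L−3 and L−4 is 1, and for every state t ∈ {0,1}^k, there exists a natural number r < 2^L with: bit L−1 of r equal to 1, bit L−2 equal to 0, bit 2 equal to 1, bits 1 and 0 equal to 0, and in each digit block i: b7 = 1−t_i, b6 = 1, b3 = 1, b2 = 1 (in particular r is even), such that r+u ≥ 2^L and r+u−2^L is an m-encoding of t. Moreover, for any such r, the number r/2 is an l⁰-form for t. -/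
/-- Bit pattern required of the first-block rule value `r`: bit `L-1 = 1`,
bit `L-2 = 0`, bit `2 = 1`, bits `1` and `0` equal to `0`, and in each digit
block `i`: `b7 = 1 - t i`, `b6 = 1`, `b3 = 1`, `b2 = 1`. -/
def IsFirstRuleValue (k : ℕ) (t : Fin k → Bool) (r : ℕ) : Prop :=
  r < 2 ^ (8 * k + 7) ∧
  r.testBit (8 * k + 6) = true ∧ r.testBit (8 * k + 5) = false ∧
  r.testBit 2 = true ∧ r.testBit 1 = false ∧ r.testBit 0 = false ∧
  ∀ i : Fin k,
    r.testBit (3 + 8 * (i : ℕ) + 7) = !(t i) ∧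
    r.testBit (3 + 8 * (i : ℕ) + 6) = true ∧
    r.testBit (3 + 8 * (i : ℕ) + 3) = true ∧
    r.testBit (3 + 8 * (i : ℕ) + 2) = true

section SelectedBits

variable (p : ℕ → Prop) [DecidablePred p] (u : ℕ)

def selectedBit (x j : ℕ) : Bool :=
  if p j then x.testBit j else (x + u).testBit j

theorem selectedBit_two_pow_add_of_lt {n j : ℕ} (hj : j < n) (x : ℕ) :
    selectedBit p u (2 ^ n + x) j = selectedBit p u x j := by
  simp only [selectedBit, add_assoc, Nat.testBit_two_pow_add_gt hj]

theorem selectedBit_two_pow_add_self (n x : ℕ) :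
    selectedBit p u (2 ^ n + x) n = !selectedBit p u x n := by
  unfold selectedBit
  split_ifs
  · exact Nat.testBit_two_pow_add_eq x n
  · rw [add_assoc]; exact Nat.testBit_two_pow_add_eq (x + u) n

theorem exists_selectedBit_eq (a : ℕ → Bool) :
    ∀ n, ∃ r < 2 ^ n, ∀ j < n, selectedBit p u r j = a j
  | 0 => ⟨0, by simp, by simp⟩
  | n + 1 => by
    obtain ⟨r, hr, hbits⟩ := exists_selectedBit_eq a n
    have hlt : 2 ^ n + r < 2 ^ (n + 1) := by rw [pow_succ]; omega
    by_cases hn : selectedBit p u r n = a n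
    · refine ⟨r, hr.trans (Nat.pow_lt_pow_succ (by norm_num)), fun j hj => ?_⟩
      rcases Nat.lt_succ_iff_lt_or_eq.mp hj with hj | rfl
      exacts [hbits j hj, hn]
    · refine ⟨2 ^ n + r, hlt, fun j hj => ?_⟩
      rcases Nat.lt_succ_iff_lt_or_eq.mp hj with hj | rfl
      · rw [selectedBit_two_pow_add_of_lt p u hj, hbits j hj]
      · rw [selectedBit_two_pow_add_self]; exact (Bool.eq_not.mpr (Ne.symm hn)).symm

end SelectedBits

/-- The top nibbles of `r` and `u` are `10??` and `01??`, the latter not `0100`, so with the carry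
from below they add up to a number in `[13, 18]`; being `0 mod 4`, that number is `16`. -/
theorem add_eq_two_pow_add_mod_of_nibbles {n r u : ℕ}
    (hr : r < 2 ^ (n + 4)) (hu : u < 2 ^ (n + 4))
    (hr3 : r.testBit (n + 3) = true) (hr2 : r.testBit (n + 2) = false)
    (hu3 : u.testBit (n + 3) = false) (hu2 : u.testBit (n + 2) = true)
    (hu10 : u.testBit (n + 1) ≠ u.testBit n)
    (hs1 : (r + u).testBit (n + 1) = false) (hs0 : (r + u).testBit n = false) :
    r + u = 2 ^ (n + 4) + (r + u) % 2 ^ n := by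
  suffices hS : (r + u) / 2 ^ n = 16 by
    have := Nat.div_add_mod (r + u) (2 ^ n)
    rw [hS] at this
    rw [pow_add]
    omega
  have hpos : 0 < 2 ^ n := by positivity
  have nibble_lt {x : ℕ} (hx : x < 2 ^ (n + 4)) : x / 2 ^ n < 16 :=
    Nat.div_lt_of_lt_mul (by rw [pow_add] at hx; norm_num at hx; exact hx)
  have nibble_bit (x j : ℕ) : x.testBit (n + j) = decide (x / 2 ^ n / 2 ^ j % 2 = 1) := by
    rw [add_comm, ← Nat.testBit_div_two_pow, Nat.testBit_eq_decide_div_mod_eq]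
  have nibble_bit_zero (x : ℕ) : x.testBit n = decide (x / 2 ^ n % 2 = 1) := by
    simpa using nibble_bit x 0
  obtain ⟨c, hc, hsum⟩ : ∃ c ≤ 1, (r + u) / 2 ^ n = r / 2 ^ n + u / 2 ^ n + c :=
    ⟨_, by split_ifs <;> simp, Nat.add_div hpos⟩
  have hR := nibble_lt hr
  have hU := nibble_lt hu
  simp only [nibble_bit, nibble_bit_zero, hsum, Nat.reducePow, decide_eq_true_eq,
    decide_eq_false_iff_not, ne_eq, decide_eq_decide] at hr3 hr2 hu3 hu2 hu10 hs1 hs0 ⊢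
  generalize r / 2 ^ n = R at *
  generalize u / 2 ^ n = U at *
  omega

section Encoding

/-- The header counts as a `k`-th digit block, with offsets `0, …, 3` only; within a block the
rule value is prescribed at offsets `2, 3, 6, 7`. -/
abbrev IsRuleBit (j : ℕ) : Prop := j < 3 ∨ 2 ≤ (j - 3) % 4

def blockTarget (b : Bool) : ℕ → Bool
  | 1 => b
  | 2 | 3 | 6 => true
  | 7 => !b
  | _ => false

def ruleTarget (k : ℕ) (t : Fin k → Bool) (j : ℕ) : Bool :=
  if j < 3 then j == 2
  else if h : (j - 3) / 8 < k then blockTarget (t ⟨(j - 3) / 8, h⟩) ((j - 3) % 8)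
  else (j - 3) % 8 == 3

variable {k : ℕ} {t : Fin k → Bool} {j o : ℕ}

theorem ruleTarget_of_lt_three (hj : j < 3) : ruleTarget k t j = (j == 2) := by
  simp [ruleTarget, hj]

theorem ruleTarget_block {i : Fin k} (hj : j = 3 + 8 * i + o) (ho : o < 8) :
    ruleTarget k t j = blockTarget (t i) o := by
  have hdiv : (j - 3) / 8 = i := by omega
  have hmod : (j - 3) % 8 = o := by omega
  simp [ruleTarget, show ¬j < 3 by omega, hdiv, hmod]

theorem ruleTarget_header (hj : j = 3 + 8 * k + o) (ho : o < 4) :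
    ruleTarget k t j = (o == 3) := by
  have hdiv : (j - 3) / 8 = k := by omega
  have hmod : (j - 3) % 8 = o := by omega
  simp [ruleTarget, show ¬j < 3 by omega, hdiv, hmod]

end Encoding

section Assembly

theorem exists_ruleTarget (k : ℕ) (t : Fin k → Bool) (u : ℕ) :
    ∃ r < 2 ^ (8 * k + 7),
      (∀ j < 8 * k + 7, IsRuleBit j → r.testBit j = ruleTarget k t j) ∧
      (∀ j < 8 * k + 7, ¬IsRuleBit j → (r + u).testBit j = ruleTarget k t j) := by
  obtain ⟨r, hr, hbits⟩ := exists_selectedBit_eq IsRuleBit u (ruleTarget k t) (8 * k + 7)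
  refine ⟨r, hr, fun j hj h => ?_, fun j hj h => ?_⟩ <;>
    simpa only [selectedBit, h, if_true, if_false] using hbits j hj

variable {k : ℕ} {t : Fin k → Bool}

theorem isFirstRuleValue_of_ruleTarget {r : ℕ} (hr : r < 2 ^ (8 * k + 7))
    (hrule : ∀ j < 8 * k + 7, IsRuleBit j → r.testBit j = ruleTarget k t j) :
    IsFirstRuleValue k t r := by
  have footer {j} (hj : j < 3) : r.testBit j = (j == 2) := by
    rw [hrule j (by omega) (Or.inl hj), ruleTarget_of_lt_three hj]
  have header {j o} (hj : j = 3 + 8 * k + o) (ho : 2 ≤ o ∧ o < 4) : r.testBit j = (o == 3) := by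
    rw [hrule j (by omega) (by unfold IsRuleBit; omega), ruleTarget_header hj (by omega)]
  have block (i : Fin k) (o : ℕ) (ho : o < 8 ∧ 2 ≤ o % 4) :
      r.testBit (3 + 8 * i + o) = blockTarget (t i) o := by
    rw [hrule _ (by omega) (by unfold IsRuleBit; omega), ruleTarget_block rfl ho.1]
  exact ⟨hr, header (o := 3) (by omega) (by norm_num), header (o := 2) (by omega) (by norm_num),
    footer (by norm_num), footer (by norm_num), footer (by norm_num),
    fun i => ⟨block i 7 (by norm_num), block i 6 (by norm_num), block i 3 (by norm_num),
      block i 2 (by norm_num)⟩⟩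

theorem isMEnc_of_ruleTarget {s : ℕ}
    (hsum : ∀ j < 8 * k + 3, ¬IsRuleBit j → s.testBit j = ruleTarget k t j) :
    IsMEnc k t (s % 2 ^ (8 * k + 3)) := by
  set m := s % 2 ^ (8 * k + 3)
  have hm : m < 2 ^ (8 * k + 3) := Nat.mod_lt _ (by positivity)
  have header {j} (hj : 8 * k + 3 ≤ j) : m.testBit j = false :=
    Nat.testBit_lt_two_pow (hm.trans_le (Nat.pow_le_pow_right (by norm_num) hj))
  have block (i : Fin k) (o : ℕ) (ho : o < 8 ∧ o % 4 < 2) :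
      m.testBit (3 + 8 * i + o) = blockTarget (t i) o := by
    have hj : 3 + 8 * i + o < 8 * k + 3 := by omega
    rw [Nat.testBit_mod_two_pow, decide_eq_true hj, Bool.true_and,
      hsum _ hj (by unfold IsRuleBit; omega), ruleTarget_block rfl ho.1]
  exact ⟨hm.trans (Nat.pow_lt_pow_right (by norm_num) (by omega)), header (by omega),
    header (by omega), header (by omega), header (by omega),
    fun i => ⟨block i 1 (by norm_num), block i 5 (by norm_num), block i 4 (by norm_num),
      block i 0 (by norm_num)⟩⟩

theorem IsFirstRuleValue.isL0Form_div_two {r : ℕ} (hr : IsFirstRuleValue k t r) :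
    IsL0Form k t (r / 2) := by
  obtain ⟨hlt, h6, h5, h2, h1, -, hblock⟩ := hr
  simp only [IsL0Form, Nat.testBit_div_two]
  exact ⟨(Nat.div_le_self r 2).trans_lt hlt, Nat.testBit_lt_two_pow hlt, h6, h5, h2, h1,
    fun i => ⟨(hblock i).1, (hblock i).2.1, (hblock i).2.2.1, (hblock i).2.2.2⟩⟩

end Assembly

theorem exists_first_rule_value_general
    (k : ℕ) (u : ℕ) (hu : u < 2 ^ (8 * k + 7))
    (h1 : u.testBit (8 * k + 6) = false) (h2 : u.testBit (8 * k + 5) = true)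
    (h3 : u.testBit (8 * k + 4) ≠ u.testBit (8 * k + 3))
    (t : Fin k → Bool) :
    (∃ r : ℕ, IsFirstRuleValue k t r ∧ 2 ∣ r ∧
      2 ^ (8 * k + 7) ≤ r + u ∧ IsMEnc k t (r + u - 2 ^ (8 * k + 7))) ∧
    (∀ r : ℕ, IsFirstRuleValue k t r → IsL0Form k t (r / 2)) := by
  refine ⟨?_, fun r hr => hr.isL0Form_div_two⟩
  obtain ⟨r, hr, hrule, hsum⟩ := exists_ruleTarget k t u
  have hsum_header {o} (ho : o < 2) : (r + u).testBit (8 * k + 3 + o) = false := by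
    rw [hsum _ (by omega) (by unfold IsRuleBit; omega),
      ruleTarget_header (o := o) (by omega) (by omega), beq_eq_false_iff_ne]
    omega
  have hrv := isFirstRuleValue_of_ruleTarget hr hrule
  obtain ⟨-, hr6, hr5, -, -, hr0, -⟩ := id hrv
  have hsplit : r + u = 2 ^ (8 * k + 7) + (r + u) % 2 ^ (8 * k + 3) :=
    add_eq_two_pow_add_mod_of_nibbles hr hu hr6 hr5 h1 h2 h3
      (hsum_header (o := 1) (by norm_num)) (hsum_header (o := 0) (by norm_num))
  refine ⟨r, hrv, Nat.dvd_of_mod_eq_zero ?_, by omega, ?_⟩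
  · simpa only [Nat.testBit_zero, decide_eq_false_iff_not, Nat.mod_two_ne_one] using hr0
  · rw [show r + u - 2 ^ (8 * k + 7) = (r + u) % 2 ^ (8 * k + 3) by omega]
    exact isMEnc_of_ruleTarget fun j hj h => hsum j (by omega) h

/-- Existence of a suitable first-block rule value: for every `u < 2^L` with
bit `L-1 = 0`, bit `L-2 = 1` and exactly one of bits `L-3`, `L-4` equal to `1`,
and every state `t`, there is an (even) `r` with the required bit pattern such
that `r + u ≥ 2^L` and `r + u - 2^L` is an m-encoding of `t`; moreover, for any
such `r`, the number `r / 2` is an l⁰-form for `t`. -/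
theorem exists_first_rule_value
    (k : ℕ) (hk : 1 ≤ k) (u : ℕ) (hu : u < 2 ^ (8 * k + 7))
    (h1 : u.testBit (8 * k + 6) = false) (h2 : u.testBit (8 * k + 5) = true)
    (h3 : u.testBit (8 * k + 4) ≠ u.testBit (8 * k + 3))
    (t : Fin k → Bool) :
    (∃ r : ℕ, IsFirstRuleValue k t r ∧ 2 ∣ r ∧
      2 ^ (8 * k + 7) ≤ r + u ∧ IsMEnc k t (r + u - 2 ^ (8 * k + 7))) ∧
    (∀ r : ℕ, IsFirstRuleValue k t r → IsL0Form k t (r / 2)) :=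
  exists_first_rule_value_general k u hu h1 h2 h3 t
end

section
/- Chained-block simulation of an arbitrary local rule: for every k ≥ 1 and every function f : {0,1}^k × {0,1}^k → {0,1}^k, there exists a function R : ℕ → ℕ with R(n) even for every 1 ≤ n ≤ N, such that for all states s, s' ∈ {0,1}^k, every l-encoding a of s and every m-encoding b of s', setting u = a+b, m₁ = R(u) + u − (N+1), ℓ = R(u)/2, v = ℓ + 2^{L−1}, m₂ = R(v) + v − (N+1), and l₂ = R(v)/2, the following hold: R(u) + u ≥ N+1; m₁ is an m-encoding of f(s,s'); ℓ is an l⁰-form for f(s,s'); m₂ = 2^{L−1}; and l₂ is an l-encoding of f(s,s'). -/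
namespace ChainedBlock

theorem testBit_add_two_pow_mul_of_lt {x y p j : ℕ} (h : j < p) :
    (x + 2 ^ p * y).testBit j = x.testBit j := by
  have := Nat.testBit_mod_two_pow (x + 2 ^ p * y) p j
  rw [Nat.add_mul_mod_self_left, Nat.testBit_mod_two_pow] at this
  simpa [h] using this.symm

theorem testBit_two_pow_mul_add_add {a b p : ℕ} (hb : b < 2 ^ p) (j : ℕ) :
    (2 ^ p * a + b).testBit (p + j) = a.testBit j := by
  simp [Nat.testBit_two_pow_mul_add a hb]

/-- Zero bits of both summands at `q` stop every carry from below. -/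
theorem testBit_add_add_one {a b q : ℕ} (ha : a.testBit q = false) (hb : b.testBit q = false) :
    (a + b).testBit (q + 1) = (a.testBit (q + 1) ^^ b.testBit (q + 1)) := by
  obtain ⟨c, hc, hdiv⟩ : ∃ c ≤ 1, (a + b) / 2 ^ q = a / 2 ^ q + b / 2 ^ q + c :=
    ⟨_, by split <;> omega, Nat.add_div (Nat.two_pow_pos q)⟩
  rw [← zero_add q, ← Nat.testBit_div_two_pow] at ha hb
  simp only [add_comm q 1, ← Nat.testBit_div_two_pow, hdiv]
  generalize a / 2 ^ q = x at *
  generalize b / 2 ^ q = y at *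
  simp only [Nat.testBit_eq_decide_div_mod_eq, pow_zero, pow_one, Nat.div_one,
    decide_eq_false_iff_not, Nat.mod_two_not_eq_one] at *
  rw [Bool.eq_iff_iff, Bool.xor_iff_ne]
  simp only [decide_eq_true_eq, ne_eq, decide_eq_decide]
  omega

theorem div_two_pow_eq_of_lt {x p : ℕ} (hx : x < 2 ^ (p + 4)) :
    x / 2 ^ p = (x.testBit p).toNat + 2 * (x.testBit (p + 1)).toNat +
      4 * (x.testBit (p + 2)).toNat + 8 * (x.testBit (p + 3)).toNat := by
  have hy : x / 2 ^ p < 16 := by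
    rw [Nat.div_lt_iff_lt_mul (Nat.two_pow_pos p)]
    rwa [pow_add, mul_comm] at hx
  have hbit (j : ℕ) : x.testBit (p + j) = (x / 2 ^ p).testBit j := by
    rw [Nat.testBit_div_two_pow, add_comm]
  rw [hbit 1, hbit 2, hbit 3, show x.testBit p = (x / 2 ^ p).testBit 0 by simpa using hbit 0]
  generalize x / 2 ^ p = y at *
  simp only [Nat.testBit_eq_decide_div_mod_eq, Bool.toNat, Bool.cond_decide]
  split_ifs <;> omega

/-- `IsMEnc k s b` asks for `IsMDigit (s i) b (3 + 8 * i)` in every digit block `i`. -/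
def IsMDigit (t : Bool) (x p : ℕ) : Prop :=
  x.testBit (p + 1) = t ∧ x.testBit (p + 5) = false ∧ x.testBit (p + 4) = false ∧
    x.testBit p = false

/-- `IsL0Form k t l` asks for `IsL0Digit (t i) l (3 + 8 * i)` in every digit block `i`. -/
def IsL0Digit (t : Bool) (x p : ℕ) : Prop :=
  x.testBit (p + 6) = !t ∧ x.testBit (p + 5) = true ∧ x.testBit (p + 2) = true ∧
    x.testBit (p + 1) = true

theorem isMDigit_congr {t : Bool} {x y p q : ℕ}
    (h : ∀ j < 7, x.testBit (p + j) = y.testBit (q + j)) : IsMDigit t x p ↔ IsMDigit t y q := by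
  have h₀ := h 0 (by norm_num)
  simp only [add_zero] at h₀
  simp only [IsMDigit, h₀, h 1 (by norm_num), h 5 (by norm_num), h 4 (by norm_num)]

theorem isL0Digit_congr {t : Bool} {x y p q : ℕ}
    (h : ∀ j < 7, x.testBit (p + j) = y.testBit (q + j)) :
    IsL0Digit t x p ↔ IsL0Digit t y q := by
  simp only [IsL0Digit, h 6 (by norm_num), h 5 (by norm_num), h 2 (by norm_num),
    h 1 (by norm_num)]

/-- The low bits `e` of `X` make `V + X ≡ 2 t (mod 4)`, and the bits `16 g` then clear
bits 4 and 5 of `V + X`; the constant `76 = 0b1001100` sets bits 2, 3 and 6. -/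
theorem exists_digit (V : ℕ) (t : Bool) :
    ∃ X < 2 ^ 8, IsL0Digit t X 1 ∧ IsMDigit t (V + X) 0 := by
  set e := (2 * t.toNat + 4 - V % 4) % 4
  set g := (4 - (V + 76 + e) / 16 % 4) % 4
  refine ⟨128 * (!t).toNat + 76 + e + 16 * g, ?_, ?_⟩
  · cases t <;>
      simp only [e, g, Bool.not_false, Bool.not_true, Bool.toNat_true, Bool.toNat_false] <;> omega
  · simp only [IsL0Digit, IsMDigit, Nat.testBit_eq_decide_div_mod_eq]
    cases t <;>
      simp only [e, g, Bool.not_false, Bool.not_true, Bool.toNat_true, Bool.toNat_false, zero_add,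
        Nat.reducePow, decide_eq_true_eq, decide_eq_false_iff_not, Nat.mod_two_not_eq_one] <;>
      omega

theorem exists_adjustment (W : ℕ) (t : ℕ → Bool) (n : ℕ) :
    ∃ Z < 2 ^ (8 * n), ∀ i < n,
      IsL0Digit (t i) Z (8 * i + 1) ∧ IsMDigit (t i) (W + Z) (8 * i) := by
  induction n with
  | zero => exact ⟨0, by norm_num, fun i hi => absurd hi (Nat.not_lt_zero i)⟩
  | succ n ih =>
    obtain ⟨Z, hZ, hdig⟩ := ih
    obtain ⟨X, hX, hXl, hXm⟩ := exists_digit ((W + Z) / 2 ^ (8 * n)) (t n)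
    refine ⟨2 ^ (8 * n) * X + Z, ?_, fun i hi => ?_⟩
    · calc 2 ^ (8 * n) * X + Z < 2 ^ (8 * n) * (X + 1) := by rw [mul_add_one]; omega
        _ ≤ 2 ^ (8 * n) * 2 ^ 8 := Nat.mul_le_mul_left _ hX
        _ = 2 ^ (8 * (n + 1)) := by ring
    rcases Nat.lt_succ_iff_lt_or_eq.mp hi with hi | rfl
    · obtain ⟨hl, hm⟩ := hdig i hi
      refine ⟨(isL0Digit_congr fun j hj => ?_).mpr hl, (isMDigit_congr fun j hj => ?_).mpr hm⟩
      · rw [add_comm _ Z, testBit_add_two_pow_mul_of_lt (by omega)]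
      · rw [show W + (2 ^ (8 * n) * X + Z) = W + Z + 2 ^ (8 * n) * X by ring,
          testBit_add_two_pow_mul_of_lt (by omega)]
    · have hsum : W + (2 ^ (8 * i) * X + Z)
          = 2 ^ (8 * i) * ((W + Z) / 2 ^ (8 * i) + X) + (W + Z) % 2 ^ (8 * i) := by
        have := Nat.mod_add_div (W + Z) (2 ^ (8 * i))
        rw [mul_add]
        omega
      refine ⟨(isL0Digit_congr fun j _ => ?_).mpr hXl, (isMDigit_congr fun j _ => ?_).mpr hXm⟩
      · rw [add_assoc, testBit_two_pow_mul_add_add hZ]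
      · rw [hsum, zero_add, testBit_two_pow_mul_add_add (Nat.mod_lt _ (Nat.two_pow_pos _))]

noncomputable def adjustment (W : ℕ) (t : ℕ → Bool) (n : ℕ) : ℕ :=
  (exists_adjustment W t n).choose

theorem adjustment_spec (W : ℕ) (t : ℕ → Bool) (n : ℕ) :
    adjustment W t n < 2 ^ (8 * n) ∧ ∀ i < n,
      IsL0Digit (t i) (adjustment W t n) (8 * i + 1) ∧
        IsMDigit (t i) (W + adjustment W t n) (8 * i) :=
  (exists_adjustment W t n).choose_spec

theorem isL0Form_of_digits {k D Z : ℕ} {t : Fin k → Bool} (hZ : Z < 2 ^ (8 * k))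
    (hD₁ : 9 ≤ D) (hD₂ : D ≤ 11) (hdig : ∀ i : Fin k, IsL0Digit (t i) Z (8 * i + 1)) :
    IsL0Form k t (2 ^ 2 * (2 ^ (8 * k) * D + Z) + 2) := by
  have hℓ (j : ℕ) : (2 ^ 2 * (2 ^ (8 * k) * D + Z) + 2).testBit (2 + j)
      = (2 ^ (8 * k) * D + Z).testBit j := testBit_two_pow_mul_add_add (by norm_num) j
  have hhead (j : ℕ) : (2 ^ (8 * k) * D + Z).testBit (8 * k + j) = D.testBit j :=
    testBit_two_pow_mul_add_add hZ j
  have hDbits : D.testBit 4 = false ∧ D.testBit 3 = true ∧ D.testBit 2 = false := by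
    interval_cases D <;> decide
  have hP : 2 ^ (8 * k + 7) = 2 ^ 7 * 2 ^ (8 * k) := by ring
  refine ⟨?_, ?_, ?_, ?_, ?_, ?_, fun i => ?_⟩
  · have := Nat.mul_le_mul_left (2 ^ (8 * k)) hD₂
    omega
  · rw [show 8 * k + 6 = 2 + (8 * k + 4) by omega, hℓ, hhead, hDbits.1]
  · rw [show 8 * k + 5 = 2 + (8 * k + 3) by omega, hℓ, hhead, hDbits.2.1]
  · rw [show 8 * k + 4 = 2 + (8 * k + 2) by omega, hℓ, hhead, hDbits.2.2]
  · rw [add_comm, testBit_add_two_pow_mul_of_lt (by norm_num)]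
    rfl
  · rw [add_comm, testBit_add_two_pow_mul_of_lt (by norm_num)]
    rfl
  · show IsL0Digit (t i) _ (3 + 8 * i)
    refine (isL0Digit_congr fun j hj => ?_).mpr (hdig i)
    rw [show 3 + 8 * i + j = 2 + (8 * i + 1 + j) by omega, hℓ, add_comm _ Z,
      testBit_add_two_pow_mul_of_lt (by omega)]

theorem isMEnc_of_digits {k S c : ℕ} {t : Fin k → Bool} (hc : c < 2 ^ 3)
    (hdig : ∀ i : Fin k, IsMDigit (t i) S (8 * i)) :
    IsMEnc k t (2 ^ 3 * (S % 2 ^ (8 * k)) + c) := by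
  have hlt : 2 ^ 3 * (S % 2 ^ (8 * k)) + c < 2 ^ (8 * k + 3) := by
    have := Nat.mod_lt S (Nat.two_pow_pos (8 * k))
    rw [pow_add]
    omega
  have hhead (j : ℕ) (hj : 8 * k + 3 ≤ j) : (2 ^ 3 * (S % 2 ^ (8 * k)) + c).testBit j = false :=
    Nat.testBit_lt_two_pow (hlt.trans_le (Nat.pow_le_pow_right two_pos hj))
  refine ⟨hlt.trans (Nat.pow_lt_pow_right one_lt_two (by omega)), hhead _ (by omega),
    hhead _ (by omega), hhead _ (by omega), hhead _ le_rfl, fun i => ?_⟩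
  show IsMDigit (t i) _ (3 + 8 * i)
  refine (isMDigit_congr fun j hj => ?_).mpr (hdig i)
  rw [add_assoc, testBit_two_pow_mul_add_add hc, Nat.testBit_mod_two_pow]
  simp [show 8 * i + j < 8 * k by omega]

/-- The header digit `16 - (W + Z) / 2 ^ (8k)` makes `W + Y` overflow to exactly `2 ^ (8k+4)`
plus the low digits of `W + Z`. -/
noncomputable def l0Word (k : ℕ) (t : Fin k → Bool) (W : ℕ) : ℕ :=
  let Z := adjustment W (fun i => if h : i < k then t ⟨i, h⟩ else false) k
  2 ^ (8 * k) * (16 - (W + Z) / 2 ^ (8 * k)) + Z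

theorem l0Word_spec {k W : ℕ} (t : Fin k → Bool) (hW₁ : 5 * 2 ^ (8 * k) ≤ W)
    (hW₂ : W ≤ 7 * 2 ^ (8 * k)) :
    IsL0Form k t (2 ^ 2 * l0Word k t W + 2) ∧
      ∃ M, W + l0Word k t W = 2 ^ (8 * k + 4) + M ∧
        ∀ c < 2 ^ 3, IsMEnc k t (2 ^ 3 * M + c) := by
  set t' : ℕ → Bool := fun i => if h : i < k then t ⟨i, h⟩ else false
  have ht' (i : Fin k) : t' i = t i := dif_pos i.isLt
  obtain ⟨hZ, hdig⟩ := adjustment_spec W t' k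
  set Z := adjustment W t' k
  set H := (W + Z) / 2 ^ (8 * k)
  have hpos := Nat.two_pow_pos (8 * k)
  have hH₁ : 5 ≤ H := (Nat.le_div_iff_mul_le hpos).mpr (by linarith)
  have hH₂ : H < 8 := (Nat.div_lt_iff_lt_mul hpos).mpr (by linarith)
  have hY : l0Word k t W = 2 ^ (8 * k) * (16 - H) + Z := rfl
  rw [hY]
  refine ⟨isL0Form_of_digits hZ (by omega) (by omega) fun i => ht' i ▸ (hdig i i.isLt).1,
    (W + Z) % 2 ^ (8 * k), ?_,
    fun c hc => isMEnc_of_digits hc fun i => ht' i ▸ (hdig i i.isLt).2⟩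
  have hWZ : (W + Z) % 2 ^ (8 * k) + 2 ^ (8 * k) * H = W + Z := Nat.mod_add_div _ _
  have hhead : 2 ^ (8 * k) * (16 - H) + 2 ^ (8 * k) * H = 2 ^ (8 * k + 4) := by
    rw [← mul_add, Nat.sub_add_cancel (by omega), pow_add]
    norm_num
  omega

theorem isLEnc_of_isL0Form {k Y : ℕ} {t : Fin k → Bool} (h : IsL0Form k t (2 ^ 2 * Y + 2)) :
    IsLEnc k t (2 ^ (8 * k + 6) - (2 * Y + 1)) := by
  obtain ⟨hlt, h6, h5, h4, -, -, hdig⟩ := h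
  have hP : 2 ^ (8 * k + 7) = 2 * 2 ^ (8 * k + 6) := by ring
  have hY : 2 * Y < 2 ^ (8 * k + 6) := by omega
  have hbit (j : ℕ) (hj : j + 1 < 8 * k + 6) :
      (2 ^ (8 * k + 6) - (2 * Y + 1)).testBit (j + 1) = !(2 ^ 2 * Y + 2).testBit (j + 2) := by
    rw [Nat.testBit_two_pow_sub_succ hY, add_comm j 2, testBit_two_pow_mul_add_add (by norm_num),
      ← Nat.testBit_div_two, Nat.mul_div_cancel_left _ two_pos]
    simp [hj]
  refine ⟨by omega, Nat.testBit_lt_two_pow (by omega), ?_, ?_, ?_, fun i => ?_⟩ <;>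
    generalize 2 ^ 2 * Y + 2 = ℓ at hbit h6 h5 h4 hdig
  · rw [hbit (8 * k + 4) (by omega)]
    simp [h6]
  · rw [hbit (8 * k + 3) (by omega)]
    simp [h5]
  · rw [hbit (8 * k + 2) (by omega)]
    simp [h4]
  · obtain ⟨b6, b5, b2, b1⟩ := hdig i
    refine ⟨?_, ?_, ?_, ?_⟩
    · rw [hbit (3 + 8 * i + 4) (by omega)]
      simp [b6]
    · rw [hbit (3 + 8 * i + 3) (by omega)]
      simp [b5]
    · rw [hbit (3 + 8 * i) (by omega)]
      simp [b2]
    · rw [show 3 + 8 * (i : ℕ) = 2 + 8 * i + 1 by ring, hbit _ (by omega)]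
      simp [show 2 + 8 * (i : ℕ) + 2 = 3 + 8 * i + 1 by ring, b1]

theorem div_two_pow_eq_of_isLEnc {k a : ℕ} {s : Fin k → Bool} (ha : IsLEnc k s a) :
    a / 2 ^ (8 * k + 3) = 5 := by
  obtain ⟨hlt, h6, h5, h4, h3, -⟩ := ha
  rw [div_two_pow_eq_of_lt (p := 8 * k + 3) hlt]
  simp [h3, h4, h5, h6]

theorem div_two_pow_eq_of_isMEnc {k b : ℕ} {s' : Fin k → Bool} (hb : IsMEnc k s' b) :
    b / 2 ^ (8 * k + 3) = 0 := by
  obtain ⟨hlt, h6, h5, h4, h3, -⟩ := hb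
  rw [div_two_pow_eq_of_lt (p := 8 * k + 3) hlt]
  simp [h3, h4, h5, h6]

theorem add_mem_Ico_of_isLEnc_of_isMEnc {k a b : ℕ} {s s' : Fin k → Bool} (ha : IsLEnc k s a)
    (hb : IsMEnc k s' b) : a + b ∈ Set.Ico (5 * 2 ^ (8 * k + 3)) (7 * 2 ^ (8 * k + 3)) := by
  have hpos := Nat.two_pow_pos (8 * k + 3)
  have ha₁ := (Nat.le_div_iff_mul_le hpos).mp (div_two_pow_eq_of_isLEnc ha).ge
  have ha₂ := (Nat.div_lt_iff_lt_mul hpos).mp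
    ((div_two_pow_eq_of_isLEnc ha).trans_lt (by norm_num : 5 < 6))
  have hb₂ := (Nat.div_lt_iff_lt_mul hpos).mp ((div_two_pow_eq_of_isMEnc hb).trans_lt one_pos)
  exact ⟨by omega, by omega⟩

def decodeL (k u : ℕ) : Fin k → Bool := fun i => u.testBit (3 + 8 * i + 5)

def decodeM (k u : ℕ) : Fin k → Bool := fun i => u.testBit (3 + 8 * i + 1)

theorem decodeL_add {k a b : ℕ} {s s' : Fin k → Bool} (ha : IsLEnc k s a)
    (hb : IsMEnc k s' b) : decodeL k (a + b) = s := by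
  funext i
  obtain ⟨ha5, ha4, -, -⟩ := ha.2.2.2.2.2 i
  obtain ⟨-, hb5, hb4, -⟩ := hb.2.2.2.2.2 i
  rw [decodeL, show 3 + 8 * (i : ℕ) + 5 = 3 + 8 * i + 4 + 1 by ring, testBit_add_add_one ha4 hb4]
  simp [ha5, hb5]

theorem decodeM_add {k a b : ℕ} {s s' : Fin k → Bool} (ha : IsLEnc k s a)
    (hb : IsMEnc k s' b) : decodeM k (a + b) = s' := by
  funext i
  obtain ⟨-, -, ha1, ha0⟩ := ha.2.2.2.2.2 i
  obtain ⟨hb1, -, -, hb0⟩ := hb.2.2.2.2.2 i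
  rw [decodeM, testBit_add_add_one ha0 hb0, ha1, hb1, Bool.false_xor]

/-- With bit `L - 1` of `n` clear, `R n = 8 Y + 4` for the word `Y` of `ℓ = R n / 2 = 4 Y + 2`,
and `n + R n = (n + 4) % 8 + 8 ((n + 4) / 8 + Y)`. With bit `L - 1` set, `n + R n` is
`2 ^ L + 2 ^ (L - 1)` up to parity. -/
noncomputable def rule (k : ℕ) (f : (Fin k → Bool) → (Fin k → Bool) → (Fin k → Bool))
    (n : ℕ) : ℕ :=
  2 * if n.testBit (8 * k + 6) then (2 ^ (8 * k + 7) + 2 ^ (8 * k + 6) - n) / 2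
    else 2 ^ 2 * l0Word k (f (decodeL k n) (decodeM k n)) ((n + 4) / 8) + 2

end ChainedBlock

open ChainedBlock in
theorem chained_block_simulation_general
    (k : ℕ)
    (f : (Fin k → Bool) → (Fin k → Bool) → (Fin k → Bool)) :
    ∃ R : ℕ → ℕ,
      (∀ n : ℕ, 1 ≤ n → n ≤ 2 ^ (8 * k + 7) - 1 → 2 ∣ R n) ∧
      ∀ (s s' : Fin k → Bool) (a b : ℕ),
        IsLEnc k s a → IsMEnc k s' b →
        R (a + b) + (a + b) ≥ 2 ^ (8 * k + 7) ∧
        IsMEnc k (f s s') (R (a + b) + (a + b) - 2 ^ (8 * k + 7)) ∧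
        IsL0Form k (f s s') (R (a + b) / 2) ∧
        R (R (a + b) / 2 + 2 ^ (8 * k + 6)) + (R (a + b) / 2 + 2 ^ (8 * k + 6))
            - 2 ^ (8 * k + 7) = 2 ^ (8 * k + 6) ∧
        IsLEnc k (f s s')
          (R (R (a + b) / 2 + 2 ^ (8 * k + 6)) / 2) := by
  refine ⟨rule k f, fun n _ _ => dvd_mul_right 2 _, fun s s' a b ha hb => ?_⟩
  obtain ⟨hu₁, hu₂⟩ := add_mem_Ico_of_isLEnc_of_isMEnc ha hb
  have hP : 2 ^ (8 * k + 3) = 8 * 2 ^ (8 * k) ∧ 2 ^ (8 * k + 4) = 16 * 2 ^ (8 * k) ∧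
      2 ^ (8 * k + 6) = 64 * 2 ^ (8 * k) ∧ 2 ^ (8 * k + 7) = 128 * 2 ^ (8 * k) := by
    refine ⟨?_, ?_, ?_, ?_⟩ <;> ring
  obtain ⟨hℓ, M, hWY, hM⟩ := l0Word_spec (f s s') (W := (a + b + 4) / 8) (by omega) (by omega)
  set Y := l0Word k (f s s') ((a + b + 4) / 8)
  have hRu : rule k f (a + b) = 2 * (2 ^ 2 * Y + 2) := by
    have : (a + b).testBit (8 * k + 6) = false := Nat.testBit_lt_two_pow (by omega)
    simp only [rule, this, decodeL_add ha hb, decodeM_add ha hb]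
    rfl
  have hRv : rule k f (2 ^ 2 * Y + 2 + 2 ^ (8 * k + 6))
      = 2 * ((2 ^ (8 * k + 7) + 2 ^ (8 * k + 6) - (2 ^ 2 * Y + 2 + 2 ^ (8 * k + 6))) / 2) := by
    have : (2 ^ 2 * Y + 2 + 2 ^ (8 * k + 6)).testBit (8 * k + 6) = true := by
      rw [add_comm, Nat.testBit_two_pow_add_eq, hℓ.2.1, Bool.not_false]
    simp only [rule, this, if_true]
  have hℓlt := hℓ.1
  rw [hRu, Nat.mul_div_cancel_left _ two_pos, hRv]
  refine ⟨by omega, ?_, hℓ, by omega, ?_⟩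
  · convert hM ((a + b + 4) % 8) (by omega) using 1
    omega
  · convert isLEnc_of_isL0Form hℓ using 1
    omega

/-- Chained-block simulation of an arbitrary local rule `f` on states: there is
a rule array `R` (with even values on `[1, N]`, `N = 2^L - 1`) such that for any
l-encoding `a` of `s` and m-encoding `b` of `s'`, setting `u = a + b`,
`m₁ = R u + u - (N+1)`, `ℓ = R u / 2`, `v = ℓ + 2^(L-1)`,
`m₂ = R v + v - (N+1)` and `l₂ = R v / 2`, one has `R u + u ≥ N + 1`, `m₁` is an
m-encoding of `f s s'`, `ℓ` is an l⁰-form for `f s s'`, `m₂ = 2^(L-1)`, and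
`l₂` is an l-encoding of `f s s'`. -/
theorem chained_block_simulation
    (k : ℕ) (hk : 1 ≤ k)
    (f : (Fin k → Bool) → (Fin k → Bool) → (Fin k → Bool)) :
    ∃ R : ℕ → ℕ,
      (∀ n : ℕ, 1 ≤ n → n ≤ 2 ^ (8 * k + 7) - 1 → 2 ∣ R n) ∧
      ∀ (s s' : Fin k → Bool) (a b : ℕ),
        IsLEnc k s a → IsMEnc k s' b →
        R (a + b) + (a + b) ≥ 2 ^ (8 * k + 7) ∧
        IsMEnc k (f s s') (R (a + b) + (a + b) - 2 ^ (8 * k + 7)) ∧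
        IsL0Form k (f s s') (R (a + b) / 2) ∧
        R (R (a + b) / 2 + 2 ^ (8 * k + 6)) + (R (a + b) / 2 + 2 ^ (8 * k + 6))
            - 2 ^ (8 * k + 7) = 2 ^ (8 * k + 6) ∧
        IsLEnc k (f s s')
          (R (R (a + b) / 2 + 2 ^ (8 * k + 6)) / 2) :=
  chained_block_simulation_general k f
end
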